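/- For disjunctive multiplicity expressions E_1 and E_2, the following are equivalent: (i) C_{E_1} ⊆ C_{E_2}, N_{E_2} ⊆ N_{E_1}, and P_{E_1} ⊆ P_{E_2}; (ii) every unordered word consistent with the triple (C_{E_2}, N_{E_2}, P_{E_2}) is also consistent with (C_{E_1}, N_{E_1}, P_{E_1}). -/

import Mathlib

open scoped Classical

variable {α : Type}

/-- Unordered words: multisets of symbols, as occurrence-count functions. -/
abbrev UWord (α : Type) := α → ℕ

/-- Multiplicities `*`, `+`, `?`, `0`, `1`. -/
inductive Mult : Type where
  | zero | one | opt | plus | star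
deriving DecidableEq

/-- Interpretation of multiplicities as sets of natural numbers. -/
def Mult.sem : Mult → Set ℕ
  | .zero => {0}
  | .one => {1}
  | .opt => {0, 1}
  | .plus => {n | 0 < n}
  | .star => Set.univ

/-- A disjunction `a₁^{M₁} | … | a_k^{M_k}`. -/
abbrev Disj (α : Type) := List (α × Mult)

/-- A disjunctive multiplicity expression `D₁^{M₁} ⊎ … ⊎ D_n^{M_n}`. -/
abbrev DME (α : Type) := List (Disj α × Mult)

/-- Language of `a^M`. -/
def singleLang (a : α) (m : Mult) : Set (UWord α) :=
  {w | w a ∈ m.sem ∧ ∀ b, b ≠ a → w b = 0}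

/-- Language of a disjunction. -/
def disjLang (D : Disj α) : Set (UWord α) :=
  {w | ∃ p ∈ D, w ∈ singleLang p.1 p.2}

/-- Pointwise (multiset) sum of a list of unordered words. -/
def sumWords (ws : List (UWord α)) : UWord α := fun a => (ws.map (fun u => u a)).sum

/-- Language of `D^M`. -/
def powLang (L : Set (UWord α)) (m : Mult) : Set (UWord α) :=
  {w | ∃ ws : List (UWord α), ws.length ∈ m.sem ∧ (∀ u ∈ ws, u ∈ L) ∧ w = sumWords ws}

/-- Language of a disjunctive multiplicity expression. -/
def dmeLang (E : DME α) : Set (UWord α) :=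
  {w | ∃ ws : List (UWord α),
      List.Forall₂ (fun p u => u ∈ powLang (disjLang p.1) p.2) E ws ∧ w = sumWords ws}

/-- Symbols occurring in a disjunctive multiplicity expression. -/
def dmeSymbols (E : DME α) : List α := E.flatMap (fun p => p.1.map Prod.fst)

/-- Normalized disjunctive multiplicity expression (each symbol occurs at most once,
each disjunction nonempty, and the two normal-form conditions of the paper). -/
def Normalized (E : DME α) : Prop :=
  (dmeSymbols E).Nodup ∧
  ∀ p ∈ E, p.1 ≠ [] ∧
    (p.2 ≠ Mult.one → p.2 = Mult.plus ∧ ∀ q ∈ p.1, q.2 = Mult.one) ∧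
    ((∃ q ∈ p.1, (0 : ℕ) ∈ q.2.sem) → ∀ q ∈ p.1, (0 : ℕ) ∈ q.2.sem)

/-- Conflicting pairs of siblings `C_E`. -/
def CE (E : DME α) : Set (α × α) :=
  {p | ¬ ∃ w ∈ dmeLang E, w p.1 ≠ 0 ∧ w p.2 ≠ 0}

/-- Extended cardinality map `N_E`. -/
def NE (E : DME α) : Set (α × ℕ) :=
  {p | ∃ w ∈ dmeLang E, w p.1 = p.2}

/-- Sets of required symbols `P_E`. -/
def PE (E : DME α) : Set (Set α) :=
  {X | ∀ w ∈ dmeLang E, ∃ a ∈ X, w a ≠ 0}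

/-- Consistency of an unordered word with a characterizing triple. -/
def ConsTriple (w : UWord α) (C : Set (α × α)) (N : Set (α × ℕ)) (P : Set (Set α)) : Prop :=
  (∀ p ∈ C, ¬ (w p.1 ≠ 0 ∧ w p.2 ≠ 0)) ∧
  (∀ a, (a, w a) ∈ N) ∧
  (∀ X ∈ P, ∃ a ∈ X, w a ≠ 0)

/-- Language of a disjunction-free multiplicity expression given as a list of
symbol/multiplicity pairs. -/
def dfLang (l : List (α × Mult)) : Set (UWord α) :=
  {w | (∀ p ∈ l, w p.1 ∈ p.2.sem) ∧ ∀ b, b ∉ l.map Prod.fst → w b = 0}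

/-- Finite unordered trees. -/
inductive UTree (α : Type) : Type where
  | node : α → List (UTree α) → UTree α

def UTree.lab : UTree α → α | .node a _ => a

def UTree.children : UTree α → List (UTree α) | .node _ ts => ts

/-- Twig queries: labels in `Σ ∪ {⋆}` (wildcard = `none`); each child subquery is tagged
with `false` for a child edge and `true` for a descendant edge. -/
inductive Twig (α : Type) : Type where
  | node : Option α → List (Twig α × Bool) → Twig α

/-- Proper subtree (proper descendant) relation. -/
inductive StrictDesc : UTree α → UTree α → Prop where
  | child {s t : UTree α} : s ∈ t.children → StrictDesc s t
  | step {s u t : UTree α} : StrictDesc s u → u ∈ t.children → StrictDesc s t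

/-- `Sat t q`: the twig query `q` can be embedded in the tree `t`
(root to root, child edges to child edges, descendant edges to proper descendants,
labels preserved up to wildcard). -/
def Sat : UTree α → Twig α → Prop
  | t, .node l qs =>
      (∀ x ∈ l, x = t.lab) ∧
      ∀ p ∈ qs, (p.2 = false → ∃ t' ∈ t.children, Sat t' p.1) ∧
                (p.2 = true → ∃ t', StrictDesc t' t ∧ Sat t' p.1)
termination_by t q => sizeOf q
decreasing_by
  all_goals
    obtain ⟨q', b'⟩ := p
    have h1 : sizeOf ((q', b') : Twig α × Bool) < sizeOf qs := List.sizeOf_lt_of_mem (by assumption)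
    simp at h1 ⊢
    omega

/-- `TEmb t' t` : the tree `t'` can be embedded in the tree `t` (root-, child-, and
label-preserving). -/
def TEmb : UTree α → UTree α → Prop
  | .node a ts', t => t.lab = a ∧ ∀ s' ∈ ts', ∃ s ∈ t.children, TEmb s' s

/-- `QGEmb E a q` : the twig query `q` can be embedded in the rooted graph with edge
relation `E` at root `a`. -/
def QGEmb (E : α → α → Prop) : α → Twig α → Prop
  | a, .node l qs =>
      (∀ x ∈ l, x = a) ∧
      ∀ p ∈ qs, (p.2 = false → ∃ b, E a b ∧ QGEmb E b p.1) ∧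
                (p.2 = true → ∃ b, Relation.TransGen E a b ∧ QGEmb E b p.1)
termination_by a q => sizeOf q
decreasing_by
  all_goals
    obtain ⟨q', b'⟩ := p
    have h1 : sizeOf ((q', b') : Twig α × Bool) < sizeOf qs := List.sizeOf_lt_of_mem (by assumption)
    simp at h1 ⊢
    omega

/-- Labeled paths of a tree: sequences of labels along root-to-node paths. -/
inductive IsLabPath : UTree α → List α → Prop where
  | root {a : α} {ts : List (UTree α)} : IsLabPath (UTree.node a ts) [a]
  | cons {a : α} {ts : List (UTree α)} {s : UTree α} {p : List α} :
      s ∈ ts → IsLabPath s p → IsLabPath (UTree.node a ts) (a :: p)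

/-- Paths of a rooted graph: nonempty vertex sequences starting at the root and
following edges. -/
def IsGPath (E : α → α → Prop) (root : α) (p : List α) : Prop :=
  p ≠ [] ∧ p.head? = some root ∧ p.Chain' E

/-- The unfolding of a rooted graph, truncated at depth `n`.  For a graph with no cycle
reachable from the root, taking `n = Fintype.card α` yields the full unfolding. -/
noncomputable def unfoldG [Fintype α] (E : α → α → Prop) : ℕ → α → UTree α
  | 0, a => .node a []
  | n + 1, a => .node a (((Finset.univ.filter fun b => E a b).toList).map (unfoldG E n))

/-- Number of leaves of a tree. -/
def leafCount : UTree α → ℕ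
  | .node _ ts => if ts.isEmpty then 1 else (ts.attach.map (fun s => leafCount s.1)).sum
decreasing_by
  have h1 := List.sizeOf_lt_of_mem s.2
  simp
  omega

/-- Disjunction-free multiplicity schema: a root label together with, for each label `a`,
a disjunction-free multiplicity expression given as the multiplicity `R a b` of every
symbol `b` (`Mult.zero` meaning `b` does not occur). -/
structure MS (α : Type) where
  root : α
  R : α → α → Mult

/-- Every node's children-label multiset matches the rule for the node's label. -/
inductive LocalOK [DecidableEq α] (R : α → α → Mult) : UTree α → Prop where
  | node {a : α} {ts : List (UTree α)} :
      (∀ b, ((ts.map UTree.lab).count b) ∈ (R a b).sem) →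
      (∀ s ∈ ts, LocalOK R s) →
      LocalOK R (UTree.node a ts)

/-- A tree satisfies a disjunction-free multiplicity schema. -/
def SatS [DecidableEq α] (S : MS α) (t : UTree α) : Prop :=
  t.lab = S.root ∧ LocalOK S.R t

/-- Edges of the universal dependency graph: `b` occurs in `R a` with multiplicity `+` or `1`. -/
def uEdge (S : MS α) (a b : α) : Prop := S.R a b = Mult.plus ∨ S.R a b = Mult.one

/-- Edges of the dependency graph: `b` occurs in `R a` with multiplicity in `{*,+,?,1}`. -/
def dEdge (S : MS α) (a b : α) : Prop := S.R a b ≠ Mult.zero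

/-- A simulation of the rooted graph `(α, root, E)` in the tree `t`. -/
def IsSimulation (E : α → α → Prop) (root : α) (t : UTree α) (R : α → UTree α → Prop) : Prop :=
  R root t ∧ (∀ a s, R a s → s.lab = a) ∧
  (∀ a s, R a s → ∀ b, E a b → ∃ s' ∈ s.children, R b s')

/-- One fuse step: two sibling nodes with the same label are merged into a single node
whose children are the children of both (applied anywhere in the tree). -/
inductive Fuse : UTree α → UTree α → Prop where
  | here {a b : α} {l₁ l₂ l₃ cs₁ cs₂ : List (UTree α)} :
      Fuse (UTree.node a (l₁ ++ UTree.node b cs₁ :: l₂ ++ UTree.node b cs₂ :: l₃))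
           (UTree.node a (l₁ ++ UTree.node b (cs₁ ++ cs₂) :: l₂ ++ l₃))
  | there {a : α} {s s' : UTree α} {l₁ l₂ : List (UTree α)} :
      Fuse s s' → Fuse (UTree.node a (l₁ ++ s :: l₂)) (UTree.node a (l₁ ++ s' :: l₂))

/-- One add step: an arbitrary new subtree is attached as an additional child of some
node of the tree. -/
inductive AddOp : UTree α → UTree α → Prop where
  | here {a : α} {s : UTree α} {l : List (UTree α)} :
      AddOp (UTree.node a l) (UTree.node a (s :: l))
  | there {a : α} {s s' : UTree α} {l₁ l₂ : List (UTree α)} :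
      AddOp s s' → AddOp (UTree.node a (l₁ ++ s :: l₂)) (UTree.node a (l₁ ++ s' :: l₂))

/-! Every word of `L(E)` is consistent with the triple of `E`, and that triple is the
strongest one with this property: a triple `(C, N, P)` satisfied by all of `L(E)` has
`C ⊆ C_E`, `N_E ⊆ N` and `P ⊆ P_E`. So (ii), applied to the words of `L(E₂)`, yields (i). -/

theorem ConsTriple.mono {w : UWord α} {C C' : Set (α × α)} {N N' : Set (α × ℕ)}
    {P P' : Set (Set α)} (hC : C ⊆ C') (hN : N' ⊆ N) (hP : P ⊆ P')
    (hw : ConsTriple w C' N' P') : ConsTriple w C N P :=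
  ⟨fun p hp => hw.1 p (hC hp), fun a => hN (hw.2.1 a), fun X hX => hw.2.2 X (hP hX)⟩

theorem consTriple_of_mem_dmeLang {E : DME α} {w : UWord α} (hw : w ∈ dmeLang E) :
    ConsTriple w (CE E) (NE E) (PE E) :=
  ⟨fun _ hp hc => hp ⟨w, hw, hc⟩, fun _ => ⟨w, hw, rfl⟩, fun _ hX => hX w hw⟩

theorem triple_subset_of_forall_mem_dmeLang_consTriple {E : DME α} {C : Set (α × α)}
    {N : Set (α × ℕ)} {P : Set (Set α)} (h : ∀ w ∈ dmeLang E, ConsTriple w C N P) :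
    C ⊆ CE E ∧ NE E ⊆ N ∧ P ⊆ PE E := by
  refine ⟨?_, ?_, fun X hX w hw => (h w hw).2.2 X hX⟩
  · rintro p hp ⟨w, hw, hconflict⟩
    exact (h w hw).1 p hp hconflict
  · rintro ⟨a, n⟩ ⟨w, hw, hwa : w a = n⟩
    exact hwa ▸ (h w hw).2.1 a

theorem triple_inclusion_iff_consistency_implication_general
    {α : Type} (E₁ E₂ : DME α) :
    (CE E₁ ⊆ CE E₂ ∧ NE E₂ ⊆ NE E₁ ∧ PE E₁ ⊆ PE E₂) ↔
      (∀ w : UWord α, ConsTriple w (CE E₂) (NE E₂) (PE E₂) →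
        ConsTriple w (CE E₁) (NE E₁) (PE E₁)) := by
  constructor
  · rintro ⟨hC, hN, hP⟩ w
    exact ConsTriple.mono hC hN hP
  · intro h
    exact triple_subset_of_forall_mem_dmeLang_consTriple fun w hw =>
      h w (consTriple_of_mem_dmeLang hw)

/-- Lemma 2: inclusion of characterizing triples is equivalent to
implication of consistency with the triples. -/
theorem triple_inclusion_iff_consistency_implication
    {α : Type} (E₁ E₂ : DME α) (h₁ : Normalized E₁) (h₂ : Normalized E₂) :
    (CE E₁ ⊆ CE E₂ ∧ NE E₂ ⊆ NE E₁ ∧ PE E₁ ⊆ PE E₂) ↔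
      (∀ w : UWord α, ConsTriple w (CE E₂) (NE E₂) (PE E₂) →
        ConsTriple w (CE E₁) (NE E₁) (PE E₁)) :=
  triple_inclusion_iff_consistency_implication_general E₁ E₂
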